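/- arXiv:1401.2335 — 4 statements merged into one kernel-verified Lean document; each statement's English description precedes it below -/
import Mathlib

section
/- For every n ≥ 1, the map proj_n sending each p in {1, …, 2^n} to the unique element of {1, …, 2^{n-1}} congruent to p modulo 2^{n-1} is a surjective homomorphism from A_n to A_{n-1}: for all p, q in {1, …, 2^n}, proj_n(p *_n q) = proj_n(p) *_{n-1} proj_n(q), and every element of {1, …, 2^{n-1}} is in the image of proj_n. -/
/-- `op` is the Laver table operation on `{1, …, 2^n}`: it maps the set to itself,
satisfies `x * 1 = x + 1` for `x < 2^n`, `2^n * 1 = 1`, and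
`x * (y * 1) = (x * y) * (x * 1)`. -/
def IsLaverOp (n : ℕ) (op : ℕ → ℕ → ℕ) : Prop :=
  (∀ x y, 1 ≤ x → x ≤ 2 ^ n → 1 ≤ y → y ≤ 2 ^ n → 1 ≤ op x y ∧ op x y ≤ 2 ^ n) ∧
  (∀ x, 1 ≤ x → x < 2 ^ n → op x 1 = x + 1) ∧
  (op (2 ^ n) 1 = 1) ∧
  (∀ x y, 1 ≤ x → x ≤ 2 ^ n → 1 ≤ y → y ≤ 2 ^ n → op x (op y 1) = op (op x y) (op x 1))

/-!
Write `π p = (p - 1) % 2^(n-1) + 1`. Left self-distributivity gives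
`p * (q + 1) = (p * q) * (p + 1)` for `p < 2^n`, and then also `p < p * q`; so
`π (p * q) = π p * π q` follows by downward induction on `p` and upward induction on `q`,
starting from the top row `2^n * q = q` and from `q = 1`. The case `q = 1` says that `π`
commutes with the cyclic successor `x ↦ x * 1`, which is just reduction modulo `2^(n-1)`.
Surjectivity holds because `π` fixes `{1, …, 2^(n-1)}`.
-/

namespace IsLaverOp

variable {n : ℕ} {op : ℕ → ℕ → ℕ}

theorem op_le (h : IsLaverOp n op) {x y : ℕ} (hx₁ : 1 ≤ x) (hx₂ : x ≤ 2 ^ n)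
    (hy₁ : 1 ≤ y) (hy₂ : y ≤ 2 ^ n) : op x y ≤ 2 ^ n :=
  (h.1 x y hx₁ hx₂ hy₁ hy₂).2

theorem op_one (h : IsLaverOp n op) {x : ℕ} (hx₁ : 1 ≤ x) (hx₂ : x < 2 ^ n) :
    op x 1 = x + 1 :=
  h.2.1 x hx₁ hx₂

theorem two_pow_op_one (h : IsLaverOp n op) : op (2 ^ n) 1 = 1 :=
  h.2.2.1

theorem op_op_one (h : IsLaverOp n op) {x y : ℕ} (hx₁ : 1 ≤ x) (hx₂ : x ≤ 2 ^ n)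
    (hy₁ : 1 ≤ y) (hy₂ : y ≤ 2 ^ n) : op x (op y 1) = op (op x y) (op x 1) :=
  h.2.2.2 x y hx₁ hx₂ hy₁ hy₂

theorem op_add_one (h : IsLaverOp n op) {x y : ℕ} (hx₁ : 1 ≤ x) (hx₂ : x < 2 ^ n)
    (hy₁ : 1 ≤ y) (hy₂ : y < 2 ^ n) : op x (y + 1) = op (op x y) (x + 1) := by
  rw [← h.op_one hy₁ hy₂, h.op_op_one hx₁ hx₂.le hy₁ hy₂.le, h.op_one hx₁ hx₂]

theorem two_pow_op (h : IsLaverOp n op) {y : ℕ} (hy₁ : 1 ≤ y) (hy₂ : y ≤ 2 ^ n) :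
    op (2 ^ n) y = y := by
  induction y, hy₁ using Nat.le_induction with
  | base => exact h.two_pow_op_one
  | succ y hy ih =>
    have hy' : y < 2 ^ n := by omega
    rw [← h.op_one hy hy', h.op_op_one Nat.one_le_two_pow le_rfl hy hy'.le, ih hy'.le,
      h.two_pow_op_one]

theorem lt_op (h : IsLaverOp n op) {x y : ℕ} (hx₁ : 1 ≤ x) (hx₂ : x < 2 ^ n)
    (hy₁ : 1 ≤ y) (hy₂ : y ≤ 2 ^ n) : x < op x y := by
  induction hd : 2 ^ n - x using Nat.strong_induction_on generalizing x y with
  | _ d ihd =>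
  induction y, hy₁ using Nat.le_induction with
  | base => rw [h.op_one hx₁ hx₂]; omega
  | succ y hy ihy =>
    have hy' : y < 2 ^ n := by omega
    have hxy : x < op x y := ihy hy'.le
    rw [h.op_add_one hx₁ hx₂ hy hy']
    rcases (h.op_le hx₁ hx₂.le hy hy'.le).lt_or_eq with hlt | htop
    · have := ihd _ (by omega) (by omega) hlt (y := x + 1) (by omega) (by omega) rfl
      omega
    · rw [htop, h.two_pow_op (by omega) (by omega)]
      omega

variable {m : ℕ} {op' : ℕ → ℕ → ℕ}

theorem map_op (h : IsLaverOp n op) (h' : IsLaverOp m op') {f : ℕ → ℕ}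
    (hf : ∀ p, 1 ≤ p → p ≤ 2 ^ n → 1 ≤ f p ∧ f p ≤ 2 ^ m) (hf_top : f (2 ^ n) = 2 ^ m)
    (hf_one : ∀ p, 1 ≤ p → p ≤ 2 ^ n → f (op p 1) = op' (f p) 1)
    {p q : ℕ} (hp₁ : 1 ≤ p) (hp₂ : p ≤ 2 ^ n) (hq₁ : 1 ≤ q) (hq₂ : q ≤ 2 ^ n) :
    f (op p q) = op' (f p) (f q) := by
  have hf_one_eq_one : f 1 = 1 := by
    simpa only [h.two_pow_op_one, hf_top, h'.two_pow_op_one] using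
      hf_one _ Nat.one_le_two_pow le_rfl
  induction hd : 2 ^ n - p using Nat.strong_induction_on generalizing p q with
  | _ d ihd =>
  rcases hp₂.lt_or_eq with hp₂ | rfl
  · induction q, hq₁ using Nat.le_induction with
    | base => rw [hf_one_eq_one, hf_one p hp₁ hp₂.le]
    | succ q hq ihq =>
      have hq' : q < 2 ^ n := by omega
      have hpq := h.lt_op hp₁ hp₂ hq hq'.le
      have hfp := hf p hp₁ hp₂.le
      have hfq := hf q hq hq'.le
      calc f (op p (q + 1)) = f (op (op p q) (p + 1)) := by rw [h.op_add_one hp₁ hp₂ hq hq']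
        _ = op' (f (op p q)) (f (p + 1)) :=
          ihd _ (by omega) (by omega) (h.op_le hp₁ hp₂.le hq hq'.le) (by omega) (by omega) rfl
        _ = op' (op' (f p) (f q)) (op' (f p) 1) := by
          rw [ihq hq'.le, ← h.op_one hp₁ hp₂, hf_one p hp₁ hp₂.le]
        _ = op' (f p) (op' (f q) 1) := (h'.op_op_one hfp.1 hfp.2 hfq.1 hfq.2).symm
        _ = op' (f p) (f (q + 1)) := by rw [← h.op_one hq hq', hf_one q hq hq'.le]
  · rw [h.two_pow_op hq₁ hq₂, hf_top, h'.two_pow_op (hf q hq₁ hq₂).1 (hf q hq₁ hq₂).2]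

end IsLaverOp

def laverProj (m p : ℕ) : ℕ := (p - 1) % 2 ^ m + 1

theorem one_le_laverProj (m p : ℕ) : 1 ≤ laverProj m p :=
  Nat.le_add_left 1 _

theorem laverProj_le (m p : ℕ) : laverProj m p ≤ 2 ^ m :=
  Nat.mod_lt _ (Nat.two_pow_pos m)

theorem laverProj_of_le {m p : ℕ} (hp₁ : 1 ≤ p) (hp₂ : p ≤ 2 ^ m) : laverProj m p = p := by
  unfold laverProj
  rw [Nat.mod_eq_of_lt (by omega)]
  omega

theorem laverProj_two_pow_succ (m : ℕ) : laverProj m (2 ^ (m + 1)) = 2 ^ m := by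
  unfold laverProj
  have := Nat.two_pow_pos m
  have : 2 ^ (m + 1) - 1 = 2 ^ m - 1 + 2 ^ m := by rw [pow_succ]; omega
  rw [this, Nat.add_mod_right, Nat.mod_eq_of_lt (by omega)]
  omega

theorem laverProj_add_one {m p : ℕ} {op : ℕ → ℕ → ℕ} (h : IsLaverOp m op) (hp : 1 ≤ p) :
    laverProj m (p + 1) = op (laverProj m p) 1 := by
  have hmod : (p + 1 - 1) % 2 ^ m = ((p - 1) % 2 ^ m + 1) % 2 ^ m := by
    rw [Nat.mod_add_mod, Nat.sub_add_cancel hp, Nat.add_sub_cancel]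
  rcases (laverProj_le m p).lt_or_eq with hlt | htop <;> unfold laverProj at * <;> rw [hmod]
  · rw [Nat.mod_eq_of_lt hlt, h.op_one (Nat.le_add_left 1 _) hlt]
  · rw [htop, Nat.mod_self, h.two_pow_op_one]

theorem laverProj_op_one {m : ℕ} {op op' : ℕ → ℕ → ℕ} (h : IsLaverOp (m + 1) op)
    (h' : IsLaverOp m op') {p : ℕ} (hp₁ : 1 ≤ p) (hp₂ : p ≤ 2 ^ (m + 1)) :
    laverProj m (op p 1) = op' (laverProj m p) 1 := by
  rcases hp₂.lt_or_eq with hp₂ | rfl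
  · rw [h.op_one hp₁ hp₂, laverProj_add_one h' hp₁]
  · rw [h.two_pow_op_one, laverProj_two_pow_succ, h'.two_pow_op_one,
      laverProj_of_le le_rfl Nat.one_le_two_pow]

/-- The map `p ↦ (p - 1) % 2^(n-1) + 1` (the unique element of `{1, …, 2^(n-1)}`
congruent to `p` mod `2^(n-1)`) is a surjective homomorphism from `A_n` to `A_(n-1)`. -/
theorem laver_projection_hom_surjective (n : ℕ) (hn : 1 ≤ n)
    (opn opm : ℕ → ℕ → ℕ) (hopn : IsLaverOp n opn) (hopm : IsLaverOp (n - 1) opm) :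
    (∀ p q, 1 ≤ p → p ≤ 2 ^ n → 1 ≤ q → q ≤ 2 ^ n →
      (opn p q - 1) % 2 ^ (n - 1) + 1 =
        opm ((p - 1) % 2 ^ (n - 1) + 1) ((q - 1) % 2 ^ (n - 1) + 1)) ∧
    (∀ q, 1 ≤ q → q ≤ 2 ^ (n - 1) →
      ∃ p, 1 ≤ p ∧ p ≤ 2 ^ n ∧ (p - 1) % 2 ^ (n - 1) + 1 = q) := by
  obtain ⟨m, rfl⟩ : ∃ m, n = m + 1 := ⟨n - 1, by omega⟩
  rw [Nat.add_sub_cancel] at hopm ⊢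
  refine ⟨fun p q hp₁ hp₂ hq₁ hq₂ => ?_, fun q hq₁ hq₂ => ?_⟩
  · exact hopn.map_op hopm (f := laverProj m)
      (fun p _ _ => ⟨one_le_laverProj m p, laverProj_le m p⟩) (laverProj_two_pow_succ m)
      (fun p hp₁ hp₂ => laverProj_op_one hopn hopm hp₁ hp₂) hp₁ hp₂ hq₁ hq₂
  · exact ⟨q, hq₁, hq₂.trans (Nat.pow_le_pow_right two_pos m.le_succ), laverProj_of_le hq₁ hq₂⟩
end

section
/- For every n ≥ 1 and all p, q in {1, …, 2^n}, the value p *_n q is odd if and only if p is even and q is odd. -/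
/-!
Row `2^n` of the table is the identity. Self-distributivity applied to `q + 1 = q * 1` gives
`p * (q + 1) = (p * q) * (p + 1)`, which expresses row `p` through the row `p * q`. Downward
induction on `p`, with induction on `q` inside, first shows `p < p * q` for `p < 2^n`, so that row
is strictly higher; the same induction then yields the parity rule, since `p * (q + 1)` is odd
exactly when `p * q` is even and `p + 1` is odd.
-/

namespace IsLaverOp

variable {n : ℕ} {op : ℕ → ℕ → ℕ} (h : IsLaverOp n op)
include h

theorem op_le_s4 {p q : ℕ} (hp1 : 1 ≤ p) (hp2 : p ≤ 2 ^ n) (hq1 : 1 ≤ q) (hq2 : q ≤ 2 ^ n) :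
    op p q ≤ 2 ^ n :=
  (h.1 p q hp1 hp2 hq1 hq2).2

theorem op_one_s4 {p : ℕ} (hp1 : 1 ≤ p) (hp : p < 2 ^ n) : op p 1 = p + 1 :=
  h.2.1 p hp1 hp

theorem top_op_one : op (2 ^ n) 1 = 1 :=
  h.2.2.1

theorem op_op_one_s4 {p q : ℕ} (hp1 : 1 ≤ p) (hp2 : p ≤ 2 ^ n) (hq1 : 1 ≤ q) (hq2 : q ≤ 2 ^ n) :
    op p (op q 1) = op (op p q) (op p 1) :=
  h.2.2.2 p q hp1 hp2 hq1 hq2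

theorem op_succ_right {p q : ℕ} (hp1 : 1 ≤ p) (hp : p < 2 ^ n) (hq1 : 1 ≤ q) (hq : q < 2 ^ n) :
    op p (q + 1) = op (op p q) (p + 1) := by
  rw [← h.op_one_s4 hq1 hq, h.op_op_one_s4 hp1 hp.le hq1 hq.le, h.op_one_s4 hp1 hp]

theorem top_op {q : ℕ} (hq1 : 1 ≤ q) (hq2 : q ≤ 2 ^ n) : op (2 ^ n) q = q := by
  induction q, hq1 using Nat.le_induction with
  | base => exact h.top_op_one
  | succ q hq1 ih =>
    have hq : q < 2 ^ n := by omega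
    calc op (2 ^ n) (q + 1) = op (op (2 ^ n) q) (op (2 ^ n) 1) := by
          rw [← h.op_op_one_s4 Nat.one_le_two_pow le_rfl hq1 hq.le, h.op_one_s4 hq1 hq]
      _ = q + 1 := by rw [ih hq.le, h.top_op_one, h.op_one_s4 hq1 hq]

theorem lt_op_s4 {p q : ℕ} (hp1 : 1 ≤ p) (hp : p < 2 ^ n) (hq1 : 1 ≤ q) (hq2 : q ≤ 2 ^ n) :
    p < op p q := by
  induction q, hq1 using Nat.le_induction with
  | base => rw [h.op_one_s4 hp1 hp]; omega
  | succ q hq1 ih =>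
    have hpr : p < op p q := ih (by omega)
    rw [h.op_succ_right hp1 hp hq1 (by omega)]
    rcases (h.op_le_s4 hp1 hp.le hq1 (by omega)).lt_or_eq with hlt | htop
    · exact hpr.trans (lt_op_s4 (by omega) hlt (by omega) (by omega))
    · rw [htop, h.top_op (by omega) (by omega)]
      omega
termination_by 2 ^ n - p

theorem odd_op_iff (hn : 1 ≤ n) {p q : ℕ} (hp1 : 1 ≤ p) (hp2 : p ≤ 2 ^ n) (hq1 : 1 ≤ q)
    (hq2 : q ≤ 2 ^ n) : Odd (op p q) ↔ Even p ∧ Odd q := by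
  rcases hp2.lt_or_eq with hp | rfl
  swap
  · simp [h.top_op hq1 hq2, Nat.even_pow, show n ≠ 0 by omega]
  induction q, hq1 using Nat.le_induction with
  | base => rw [h.op_one_s4 hp1 hp, Nat.odd_add_one, Nat.not_odd_iff_even, and_iff_left odd_one]
  | succ q hq1 ih =>
    have hpr : p < op p q := h.lt_op_s4 hp1 hp hq1 (by omega)
    rw [h.op_succ_right hp1 hp hq1 (by omega),
      odd_op_iff hn (by omega) (h.op_le_s4 hp1 hp.le hq1 (by omega)) (by omega) (by omega),
      ← Nat.not_odd_iff_even, ih (by omega), Nat.odd_add_one, Nat.odd_add_one, Nat.not_odd_iff_even]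
    tauto
termination_by 2 ^ n - p

end IsLaverOp

/-- For `n ≥ 1`, the value `p *_n q` is odd if and only if `p` is even and `q` is odd. -/
theorem laver_odd_iff (n : ℕ) (hn : 1 ≤ n) (op : ℕ → ℕ → ℕ) (h : IsLaverOp n op)
    (p q : ℕ) (hp1 : 1 ≤ p) (hp2 : p ≤ 2 ^ n) (hq1 : 1 ≤ q) (hq2 : q ≤ 2 ^ n) :
    Odd (op p q) ↔ Even p ∧ Odd q :=
  h.odd_op_iff hn hp1 hp2 hq1 hq2
end

section
/- For every n ≥ 0, every p in {1, …, 2^n}, and every natural number d such that 2^d divides p, one has p *_n (2^n − q) = 2^n − q for every q with 0 ≤ q < 2^d. -/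
/-- `laver n x y` is `x *_n y`, computed from `x * (y + 1) = (x * y) * (x + 1)`, which recurses
into a later row since `x * y > x` for `x < 2^n`. Column `0` stands for column `2^n`, and rows
`x ≥ 2^n` are the identity. -/
def laver (n x y : ℕ) : ℕ :=
  if 2 ^ n ≤ x then y
  else
    match y with
    | 0 => 2 ^ n
    | y + 1 => if x < laver n x y then laver n (laver n x y) (x + 1) else 2 ^ n
termination_by (2 ^ n - x, y)
decreasing_by
  · exact Prod.Lex.right _ (Nat.lt_succ_self y)
  · exact Prod.Lex.left _ _ (by omega)

section Basic

variable {n x y : ℕ}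

theorem laver_of_le (h : 2 ^ n ≤ x) (y : ℕ) : laver n x y = y := by
  rw [laver.eq_def, if_pos h]

theorem laver_zero (h : x < 2 ^ n) : laver n x 0 = 2 ^ n := by
  rw [laver.eq_def, if_neg (by omega)]

private theorem laver_succ_of_lt_laver (h : x < 2 ^ n) (hz : x < laver n x y) :
    laver n x (y + 1) = laver n (laver n x y) (x + 1) := by
  rw [laver.eq_def, if_neg (by omega)]
  exact if_pos hz

theorem lt_laver_and_laver_le (h : x < 2 ^ n) (y : ℕ) :
    x < laver n x y ∧ laver n x y ≤ 2 ^ n := by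
  induction x using Nat.strong_decreasing_induction generalizing y with
  | base => exact ⟨2 ^ n, fun m hm hm' => absurd hm' (by omega)⟩
  | step x ih =>
    induction y with
    | zero => rw [laver_zero h]; omega
    | succ y ihy =>
      rw [laver_succ_of_lt_laver h ihy.1]
      rcases ihy.2.eq_or_lt with hz | hz
      · rw [hz, laver_of_le le_rfl]; omega
      · have := ih _ ihy.1 hz (x + 1); omega

theorem lt_laver (h : x < 2 ^ n) (y : ℕ) : x < laver n x y := (lt_laver_and_laver_le h y).1

theorem laver_le (h : x < 2 ^ n) (y : ℕ) : laver n x y ≤ 2 ^ n := (lt_laver_and_laver_le h y).2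

theorem laver_succ (h : x < 2 ^ n) (y : ℕ) : laver n x (y + 1) = laver n (laver n x y) (x + 1) :=
  laver_succ_of_lt_laver h (lt_laver h y)

theorem laver_one (h : x < 2 ^ n) : laver n x 1 = x + 1 := by
  rw [laver_succ h, laver_zero h, laver_of_le le_rfl]

theorem laver_zero_left (hy1 : 1 ≤ y) (hy : y ≤ 2 ^ n) : laver n 0 y = y := by
  induction y, hy1 using Nat.le_induction with
  | base => exact laver_one (Nat.two_pow_pos n)
  | succ y hy1 ih => rw [laver_succ (Nat.two_pow_pos n), ih (by omega), laver_one (by omega)]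

theorem exists_laver_eq_pow (h : x < 2 ^ n) :
    ∃ y, 0 < y ∧ y ≤ 2 ^ n - x ∧ laver n x y = 2 ^ n := by
  have climb : ∀ k, 1 ≤ k →
      (∃ j, 0 < j ∧ j ≤ k ∧ laver n x j = 2 ^ n) ∨ x + k ≤ laver n x k := by
    intro k hk
    induction k, hk using Nat.le_induction with
    | base => exact Or.inr (laver_one h).ge
    | succ k hk ih =>
      rcases ih with ⟨j, hj0, hjk, hj⟩ | hle
      · exact Or.inl ⟨j, hj0, by omega, hj⟩
      rcases (laver_le h k).eq_or_lt with heq | hlt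
      · exact Or.inl ⟨k, by omega, by omega, heq⟩
      · have := lt_laver hlt (x + 1)
        rw [laver_succ h]
        omega
  rcases climb (2 ^ n - x) (by omega) with ⟨j, hj0, hj, hjx⟩ | hle
  · exact ⟨j, hj0, hj, hjx⟩
  · exact ⟨2 ^ n - x, by omega, le_rfl, le_antisymm (laver_le h _) (by omega)⟩

end Basic

noncomputable def period (n x : ℕ) : ℕ := sInf {y | 0 < y ∧ laver n x y = 2 ^ n}

section Period

variable {n x y : ℕ}

theorem period_spec (h : x < 2 ^ n) : 0 < period n x ∧ laver n x (period n x) = 2 ^ n := by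
  obtain ⟨y, hy0, -, hy⟩ := exists_laver_eq_pow h
  exact Nat.sInf_mem (s := {y | 0 < y ∧ laver n x y = 2 ^ n}) ⟨y, hy0, hy⟩

theorem period_pos (h : x < 2 ^ n) : 0 < period n x := (period_spec h).1

theorem laver_period (h : x < 2 ^ n) : laver n x (period n x) = 2 ^ n := (period_spec h).2

theorem period_le_sub (h : x < 2 ^ n) : period n x ≤ 2 ^ n - x := by
  obtain ⟨y, hy0, hyx, hy⟩ := exists_laver_eq_pow h
  exact (Nat.sInf_le (s := {y | 0 < y ∧ laver n x y = 2 ^ n}) ⟨hy0, hy⟩).trans hyx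

theorem laver_add_period (h : x < 2 ^ n) (y : ℕ) :
    laver n x (y + period n x) = laver n x y := by
  induction y with
  | zero => rw [zero_add, laver_period h, laver_zero h]
  | succ y ih => rw [add_right_comm, laver_succ h, ih, laver_succ h]

theorem laver_add_mul_period (h : x < 2 ^ n) (y k : ℕ) :
    laver n x (y + period n x * k) = laver n x y := by
  induction k with
  | zero => rfl
  | succ k ih => rw [Nat.mul_succ, ← add_assoc, laver_add_period h, ih]

theorem laver_eq_pow_iff (h : x < 2 ^ n) : laver n x y = 2 ^ n ↔ period n x ∣ y := by
  constructor
  · intro hy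
    rw [← Nat.mod_add_div y (period n x), laver_add_mul_period h] at hy
    refine Nat.dvd_of_mod_eq_zero (Nat.eq_zero_of_not_pos fun hpos => ?_)
    exact Nat.notMem_of_lt_sInf (Nat.mod_lt y (period_pos h)) ⟨hpos, hy⟩
  · rintro ⟨k, rfl⟩
    rw [← zero_add (period n x * k), laver_add_mul_period h, laver_zero h]

theorem laver_add_of_period_dvd {m : ℕ} (h : x < 2 ^ n) (hm : period n x ∣ m) (y : ℕ) :
    laver n x (y + m) = laver n x y := by
  obtain ⟨k, rfl⟩ := hm
  exact laver_add_mul_period h y k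

theorem laver_add_of_laver_eq_pow {m : ℕ} (h : x < 2 ^ n) (hm : laver n x m = 2 ^ n) (y : ℕ) :
    laver n x (y + m) = laver n x y :=
  laver_add_of_period_dvd h ((laver_eq_pow_iff h).1 hm) y

theorem laver_succ_of_period_dvd (h : x < 2 ^ n) (hy : period n x ∣ y) :
    laver n x (y + 1) = x + 1 := by
  rw [add_comm, laver_add_of_period_dvd h hy, laver_one h]

theorem strictMonoOn_laver (h : x < 2 ^ n) :
    StrictMonoOn (laver n x) (Set.Icc 1 (period n x)) := by
  refine strictMonoOn_of_lt_add_one Set.ordConnected_Icc fun a _ ha ha1 => ?_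
  rw [laver_succ h]
  refine lt_laver (lt_of_le_of_ne (laver_le h a) fun heq => ?_) _
  have := Nat.le_of_dvd ha.1 ((laver_eq_pow_iff h).1 heq)
  have := ha1.2
  omega

theorem laver_add_eq_add {k v : ℕ} (h : x < 2 ^ n) (hy : laver n x y = v)
    (hrows : ∀ i < k, laver n (v + i) (x + 1) = v + i + 1) : laver n x (y + k) = v + k := by
  induction k with
  | zero => exact hy
  | succ k ih =>
    rw [← add_assoc, laver_succ h, ih fun i hi => hrows i (by omega), hrows k (by omega)]
    rfl

end Period

namespace IsLaverOp

variable {n : ℕ} {op : ℕ → ℕ → ℕ}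

theorem op_pow_left (hop : IsLaverOp n op) {y : ℕ} (hy1 : 1 ≤ y) (hy : y ≤ 2 ^ n) :
    op (2 ^ n) y = y := by
  induction y, hy1 using Nat.le_induction with
  | base => exact hop.2.2.1
  | succ y hy1 ih =>
    have hy1' : op y 1 = y + 1 := hop.2.1 y hy1 (by omega)
    rw [← hy1', hop.2.2.2 _ _ Nat.one_le_two_pow le_rfl hy1 (by omega), ih (by omega), hop.2.2.1]

theorem eq_laver (hop : IsLaverOp n op) {x y : ℕ} (hx1 : 1 ≤ x) (hx : x ≤ 2 ^ n)
    (hy1 : 1 ≤ y) (hy : y ≤ 2 ^ n) : op x y = laver n x y := by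
  induction x using Nat.strong_decreasing_induction generalizing y with
  | base => exact ⟨2 ^ n, fun m hm => by intros; omega⟩
  | step x ih =>
    rcases hx.eq_or_lt with rfl | hx
    · rw [hop.op_pow_left hy1 hy, laver_of_le le_rfl]
    induction y, hy1 using Nat.le_induction with
    | base => rw [hop.2.1 x hx1 hx, laver_one hx]
    | succ y hy1 ihy =>
      have hz := lt_laver_and_laver_le hx y
      rw [← hop.2.1 y hy1 (by omega), hop.2.2.2 x y hx1 hx.le hy1 (by omega), ihy (by omega),
        hop.2.1 x hx1 hx, ih _ hz.1 (by omega) hz.2 (by omega) (by omega), hop.2.1 y hy1 (by omega),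
        laver_succ hx]

end IsLaverOp

section Succ

variable {n x : ℕ}

theorem laver_succ_add_pow (hrow : ∀ x, laver n x (2 ^ n) = 2 ^ n) (hx : x < 2 ^ n) (y : ℕ) :
    laver (n + 1) (x + 2 ^ n) y = laver n x y + 2 ^ n := by
  have hN := Nat.two_pow_succ n
  induction x using Nat.strong_decreasing_induction generalizing y with
  | base => exact ⟨2 ^ n, fun m hm hm' => absurd hm' (by omega)⟩
  | step x ih =>
    induction y with
    | zero => rw [laver_zero (by omega), laver_zero hx]; omega
    | succ y ihy =>
      rw [laver_succ (by omega), ihy, laver_succ hx]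
      rcases (laver_le hx y).eq_or_lt with hw | hw
      · rw [hw, ← hN, laver_of_le le_rfl, laver_of_le le_rfl]; omega
      · rw [ih _ (lt_laver hx y) hw, show x + 2 ^ n + 1 = x + 1 + 2 ^ n by omega,
          laver_add_of_laver_eq_pow hw (hrow _)]

theorem laver_succ_eq_or_eq_add_pow (hrow : ∀ x, laver n x (2 ^ n) = 2 ^ n) (hx : x < 2 ^ n)
    (y : ℕ) :
    laver (n + 1) x y = laver n x y ∨ laver (n + 1) x y = laver n x y + 2 ^ n := by
  have hN := Nat.two_pow_succ n
  induction x using Nat.strong_decreasing_induction generalizing y with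
  | base => exact ⟨2 ^ n, fun m hm hm' => absurd hm' (by omega)⟩
  | step x ih =>
    induction y with
    | zero => rw [laver_zero (by omega), laver_zero hx]; omega
    | succ y ihy =>
      rw [laver_succ (by omega), laver_succ hx]
      have hxw := lt_laver hx y
      rcases ihy with hz | hz <;> rw [hz] <;> rcases (laver_le hx y).eq_or_lt with hw | hw
      · have := laver_succ_add_pow hrow (Nat.two_pow_pos n) (x + 1)
        rw [zero_add, laver_zero_left (by omega) (by omega)] at this
        rw [hw, this, laver_of_le le_rfl]
        exact Or.inr rfl
      · exact ih _ hxw hw _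
      · rw [hw, ← hN, laver_of_le le_rfl, laver_of_le le_rfl]
        exact Or.inl rfl
      · exact Or.inr (laver_succ_add_pow hrow hw _)

theorem period_dvd_period_succ (hrow : ∀ x, laver n x (2 ^ n) = 2 ^ n) (hx : x < 2 ^ n) :
    period n x ∣ period (n + 1) x := by
  have hN := Nat.two_pow_succ n
  have htop := laver_period (n := n + 1) (x := x) (by omega)
  rcases laver_succ_eq_or_eq_add_pow hrow hx (period (n + 1) x) with h | h
  · have := laver_le hx (period (n + 1) x); omega
  · exact (laver_eq_pow_iff hx).1 (by omega)

theorem period_succ_dvd (hrow : ∀ x, laver n x (2 ^ n) = 2 ^ n) (hx : x < 2 ^ n) :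
    period (n + 1) x ∣ 2 * period n x := by
  have hN := Nat.two_pow_succ n
  have hxN : x < 2 ^ (n + 1) := by omega
  have ht := period_pos hx
  have htop := laver_period hxN
  rcases laver_succ_eq_or_eq_add_pow hrow hx (period n x) with hv | hv <;>
    rw [laver_period hx] at hv
  · -- `period (n + 1) x` is a proper multiple of `period n x`: the row still rises up to there
    obtain ⟨c, hc⟩ := period_dvd_period_succ hrow hx
    have hc2 : 2 ≤ c := by
      have : c ≠ 0 := by rintro rfl; have := period_pos hxN; simp_all
      have : c ≠ 1 := by rintro rfl; rw [mul_one] at hc; rw [hc] at htop; omega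
      omega
    have hrise : laver (n + 1) x (period n x) < laver (n + 1) x (2 * period n x) :=
      strictMonoOn_laver hxN ⟨ht, by rw [hc]; nlinarith⟩ ⟨by omega, by rw [hc]; nlinarith⟩
        (by omega)
    have h2 := laver_succ_eq_or_eq_add_pow hrow hx (2 * period n x)
    rw [(laver_eq_pow_iff hx).2 (dvd_mul_left (period n x) 2)] at h2
    exact (laver_eq_pow_iff hxN).1 (by omega)
  · exact ((laver_eq_pow_iff hxN).1 (by omega)).trans (dvd_mul_left _ 2)

theorem laver_succ_pow_right (hrow : ∀ x, laver n x (2 ^ n) = 2 ^ n) (x : ℕ) :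
    laver (n + 1) x (2 ^ (n + 1)) = 2 ^ (n + 1) := by
  have hN := Nat.two_pow_succ n
  rcases lt_or_ge x (2 ^ n) with hx | hx
  · refine (laver_eq_pow_iff (by omega)).2 ((period_succ_dvd hrow hx).trans ?_)
    rw [pow_succ']
    exact mul_dvd_mul_left 2 ((laver_eq_pow_iff hx).1 (hrow x))
  rcases lt_or_ge x (2 ^ (n + 1)) with hx' | hx'
  · obtain ⟨x, rfl⟩ : ∃ x', x = x' + 2 ^ n := ⟨x - 2 ^ n, by omega⟩
    rw [laver_succ_add_pow hrow (by omega), hN, laver_add_of_laver_eq_pow (by omega) (hrow x),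
      hrow x]
  · exact laver_of_le hx' _

end Succ

theorem laver_pow_right (n x : ℕ) : laver n x (2 ^ n) = 2 ^ n := by
  induction n generalizing x with
  | zero =>
    rcases Nat.eq_zero_or_pos x with rfl | hx
    · exact laver_one (by norm_num)
    · exact laver_of_le hx _
  | succ n ih => exact laver_succ_pow_right ih x

theorem period_dvd_pow {n x : ℕ} (hx : x < 2 ^ n) : period n x ∣ 2 ^ n :=
  (laver_eq_pow_iff hx).1 (laver_pow_right n x)

theorem two_mul_dvd_two_pow {a m d : ℕ} (ha : a ∣ 2 ^ m) (had : a < 2 ^ d) :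
    2 * a ∣ 2 ^ d := by
  obtain ⟨j, -, rfl⟩ := (Nat.dvd_prime_pow Nat.prime_two).1 ha
  rw [← pow_succ']
  exact pow_dvd_pow 2 ((Nat.pow_lt_pow_iff_right (by norm_num)).1 had)

section Tail

variable {n x d q : ℕ}

theorem laver_succ_pow_sub (hx0 : 0 < x) (hx : x < 2 ^ n) (hd : 2 ^ d ∣ x) (hq : q < 2 ^ d)
    (h : laver n x (2 ^ n - q) = 2 ^ n - q) :
    laver (n + 1) x (2 ^ (n + 1) - q) = 2 ^ (n + 1) - q := by
  have hN := Nat.two_pow_succ n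
  have h2d : 2 ^ d ≤ x := Nat.le_of_dvd hx0 hd
  have hcol : laver n x (2 ^ (n + 1) - q) = 2 ^ n - q := by
    rw [show 2 ^ (n + 1) - q = 2 ^ n - q + 2 ^ n by omega,
      laver_add_of_laver_eq_pow hx (laver_pow_right n x), h]
  rcases laver_succ_eq_or_eq_add_pow (laver_pow_right n) hx (2 ^ (n + 1) - q) with hlow | hhigh
  · exfalso
    have hrows : ∀ i < q, laver (n + 1) (2 ^ n - q + i) (x + 1) = 2 ^ n - q + i + 1 := by
      intro i hi
      have hz : 2 ^ n - q + i < 2 ^ n := by omega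
      refine laver_succ_of_period_dvd (by omega) ((period_succ_dvd (laver_pow_right n) hz).trans
        ((two_mul_dvd_two_pow (period_dvd_pow hz) ?_).trans hd))
      have := period_le_sub hz
      omega
    have := laver_add_eq_add (by omega) (hlow.trans hcol) hrows
    rw [show 2 ^ (n + 1) - q + q = 2 ^ (n + 1) by omega, laver_pow_right] at this
    omega
  · rw [hhigh, hcol]
    omega

theorem laver_pow_sub (hx0 : 0 < x) (hx : x ≤ 2 ^ n) (hd : 2 ^ d ∣ x) (hq : q < 2 ^ d) :
    laver n x (2 ^ n - q) = 2 ^ n - q := by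
  induction n generalizing x with
  | zero => exact laver_of_le hx0 _
  | succ n ih =>
    have hN := Nat.two_pow_succ n
    rcases lt_or_ge x (2 ^ n) with hlt | hge
    · exact laver_succ_pow_sub hx0 hlt hd hq (ih hx0 hlt.le hd)
    rcases hx.eq_or_lt with rfl | hlt
    · exact laver_of_le le_rfl _
    obtain ⟨x, rfl⟩ : ∃ x', x = x' + 2 ^ n := ⟨x - 2 ^ n, by omega⟩
    have hdn : 2 ^ d ∣ 2 ^ n := pow_dvd_pow 2 (Nat.lt_succ_iff.1
      ((Nat.pow_lt_pow_iff_right one_lt_two).1 ((Nat.le_of_dvd hx0 hd).trans_lt hlt)))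
    have hqn : q < 2 ^ n := hq.trans_le (Nat.le_of_dvd (Nat.two_pow_pos n) hdn)
    rw [laver_succ_add_pow (laver_pow_right n) (by omega),
      show 2 ^ (n + 1) - q = 2 ^ n - q + 2 ^ n by omega,
      laver_add_of_laver_eq_pow (by omega) (laver_pow_right n x)]
    rcases Nat.eq_zero_or_pos x with rfl | hx0'
    · rw [laver_zero_left (by omega) (Nat.sub_le _ _)]
    · rw [ih hx0' (by omega) ((Nat.dvd_add_left hdn).1 hd)]

end Tail

/-- If `2^d` divides `p`, then `p *_n (2^n − q) = 2^n − q` holds for `0 ≤ q < 2^d`. -/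
theorem laver_tail_fixed (n : ℕ) (op : ℕ → ℕ → ℕ) (h : IsLaverOp n op)
    (p : ℕ) (hp1 : 1 ≤ p) (hp2 : p ≤ 2 ^ n)
    (d : ℕ) (hd : 2 ^ d ∣ p) :
    ∀ q, q < 2 ^ d → op p (2 ^ n - q) = 2 ^ n - q := by
  intro q hq
  have : 2 ^ d ≤ p := Nat.le_of_dvd hp1 hd
  rw [h.eq_laver hp1 hp2 (by omega) (by omega)]
  exact laver_pow_sub hp1 hp2 hd hq
end

section
/- For every n ≥ 0, the sets Col_n(q) for q in {1, …, 2^n} are pairwise distinct: if 1 ≤ q < r ≤ 2^n then Col_n(q) ≠ Col_n(r). Moreover, for n ≥ 1 and every q ≤ 2^{n-1}, one has Col_n(q) = Col_n(q + 2^{n-1}) ∪ {q}, and q does not belong to Col_n(q + 2^{n-1}). -/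
/-- The `q`-th column of the Laver table: the set of values `p *_n q` for `1 ≤ p ≤ 2^n`. -/
def laverCol (n : ℕ) (op : ℕ → ℕ → ℕ) (q : ℕ) : Set ℕ :=
  {r | ∃ p, 1 ≤ p ∧ p ≤ 2 ^ n ∧ op p q = r}

/-!
Write `N = 2^n`, `h = 2^(n-1)` and `x * y` for the operation of `A_n`. Reduction modulo `h` into
`{1, …, h}` is a homomorphism `A_n → A_{n-1}`, and the rows `h ≤ x < N` of `A_n` are a shifted copy
of `A_{n-1}`. From this, by induction on `n`, every row `p < N` is periodic with a period dividing
`h`, so `p * q = p * (q + h)`; together with `N * q = q` and `h * q = q + h` this gives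
`Col(q) = Col(q + h) ∪ {q}`.

That `q ∉ Col(q + h)` means `p * q ≠ q` for `p < N` and `q ≤ h`. This follows from the bound
`N - q < gcd(p, N)` on fixed points of row `p`, proved by induction on `n` together with
`p * (h - s) = N - s` for `s < gcd(p, N)`: the values just below a hit of `N` in row `p` are forced,
because `p + 1 ≡ 1` modulo `gcd(p, N)`.

Finally two columns `q < r` with the same residue modulo `h` are `q` and `q + h`, which `q`
separates; otherwise reduction modulo `h` maps them onto distinct columns of `A_{n-1}`.
-/

namespace Laver

-- The operation on `{1, …, N}` with `N * y = y`, `x * 1 = x + 1` and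
-- `x * (y + 1) = (x * y) * (x + 1)`, filled in from the last row upwards; for `N = 2^n` it is
-- `A_n`. The `max` only makes termination evident: it is never active (`lav_succ`).
def lav (N x y : ℕ) : ℕ :=
  if hx : N ≤ x then y
  else if hy : y ≤ 1 then x + 1
  else lav N (max (lav N x (y - 1)) (x + 1)) (x + 1)
termination_by (N - x, y)
decreasing_by
  · exact Prod.Lex.right _ (by omega)
  · exact Prod.Lex.left _ _ (by omega)

theorem lav_of_le {N x : ℕ} (h : N ≤ x) (y : ℕ) : lav N x y = y := by
  rw [lav, dif_pos h]

theorem lav_one {N x : ℕ} (h : x < N) : lav N x 1 = x + 1 := by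
  rw [lav, dif_neg (by omega), dif_pos le_rfl]

theorem lav_succ_max {N x y : ℕ} (h : x < N) (hy : 1 ≤ y) :
    lav N x (y + 1) = lav N (max (lav N x y) (x + 1)) (x + 1) := by
  rw [lav, dif_neg (by omega), dif_neg (by omega), Nat.add_sub_cancel]

theorem lav_mem_Ioc {N x : ℕ} (hx : x < N) (y : ℕ) : lav N x y ∈ Set.Ioc x N := by
  rcases Nat.lt_or_ge y 2 with hy | hy
  · rw [lav, dif_neg (by omega), dif_pos (by omega)]
    exact ⟨by omega, hx⟩
  · obtain ⟨y, rfl⟩ : ∃ y', y = y' + 1 := ⟨y - 1, by omega⟩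
    rw [lav_succ_max hx (by omega)]
    set u := max (lav N x y) (x + 1)
    have hu : x + 1 ≤ u := le_max_right _ _
    rcases le_or_gt N u with hN | hN
    · rw [lav_of_le hN]
      exact ⟨by omega, hx⟩
    · obtain ⟨h1, h2⟩ := lav_mem_Ioc hN (x + 1)
      exact ⟨by omega, h2⟩
termination_by N - x

theorem lav_succ {N x y : ℕ} (hx : x < N) (hy : 1 ≤ y) :
    lav N x (y + 1) = lav N (lav N x y) (x + 1) := by
  rw [lav_succ_max hx hy, max_eq_left (lav_mem_Ioc hx y).1]

theorem exists_lav_eq_top {N x : ℕ} (hx : x < N) :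
    ∃ y, 0 < y ∧ y ≤ N - x ∧ lav N x y = N := by
  by_contra! H
  have grow : ∀ j, 1 ≤ j → j ≤ N - x → x + j ≤ lav N x j := by
    intro j hj hjN
    induction j, hj using Nat.le_induction with
    | base => rw [lav_one hx]
    | succ j hj ih =>
      have hxj := ih (by omega)
      have hlt : lav N x j < N :=
        lt_of_le_of_ne (lav_mem_Ioc hx j).2 (H j (by omega) (by omega))
      rw [lav_succ hx hj]
      have := (lav_mem_Ioc hlt (x + 1)).1
      omega
  have := grow (N - x) (by omega) le_rfl
  exact H (N - x) (by omega) le_rfl (le_antisymm (lav_mem_Ioc hx _).2 (by omega))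

-- The representative of `z` modulo `m` in `{1, …, m}`; `proj (2 ^ n)` maps `A_{n+1}` onto `A_n`.
def proj (m z : ℕ) : ℕ := (z - 1) % m + 1

theorem one_le_proj (m z : ℕ) : 1 ≤ proj m z := Nat.le_add_left 1 _

theorem proj_le {m : ℕ} (hm : 0 < m) (z : ℕ) : proj m z ≤ m := Nat.mod_lt _ hm

theorem proj_of_le {m z : ℕ} (h1 : 1 ≤ z) (h : z ≤ m) : proj m z = z := by
  unfold proj
  rw [Nat.mod_eq_of_lt (by omega)]
  omega

theorem proj_add_mul {m z : ℕ} (h1 : 1 ≤ z) (k : ℕ) : proj m (z + k * m) = proj m z := by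
  unfold proj
  rw [show z + k * m - 1 = z - 1 + k * m by omega, Nat.add_mul_mod_self_right]

theorem proj_add_div_mul {m z : ℕ} (h1 : 1 ≤ z) : proj m z + (z - 1) / m * m = z := by
  have := Nat.mod_add_div' (z - 1) m
  unfold proj
  omega

theorem proj_of_lt {m z : ℕ} (h : m < z) (h2 : z ≤ 2 * m) : proj m z = z - m := by
  have := proj_add_mul (m := m) (z := z - m) (by omega) 1
  rwa [one_mul, Nat.sub_add_cancel h.le, proj_of_le (z := z - m) (by omega) (by omega)] at this

theorem proj_eq_or {m v : ℕ} (h1 : 1 ≤ v) (h2 : v ≤ 2 * m) :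
    v = proj m v ∨ v = proj m v + m := by
  rcases le_or_gt v m with h | h
  · exact Or.inl (proj_of_le h1 h).symm
  · right
    rw [proj_of_lt h h2]
    omega

theorem proj_eq_self_iff {m z : ℕ} (hm : 0 < m) (hz : 1 ≤ z) : proj m z = m ↔ m ∣ z := by
  have hdvd : m ∣ z ↔ m ∣ proj m z := by
    conv_lhs => rw [← proj_add_div_mul (m := m) hz]
    exact Nat.dvd_add_left (dvd_mul_left m _)
  rw [hdvd]
  exact ⟨fun h => by rw [h],
    fun h => le_antisymm (proj_le hm z) (Nat.le_of_dvd (one_le_proj m z) h)⟩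

theorem proj_proj {d m : ℕ} (h : d ∣ m) (z : ℕ) : proj d (proj m z) = proj d z := by
  unfold proj
  rw [Nat.add_sub_cancel, Nat.mod_mod_of_dvd _ h]

theorem proj_eq_one {d z : ℕ} (h : d ∣ z - 1) : proj d z = 1 := by
  unfold proj
  rw [Nat.mod_eq_zero_of_dvd h]

theorem dvd_proj_sub_one {d m z : ℕ} (hd : d ∣ m) (h : d ∣ z - 1) : d ∣ proj m z - 1 := by
  unfold proj
  rwa [Nat.add_sub_cancel, Nat.dvd_mod_iff hd]

theorem proj_succ {m z : ℕ} (hm : 0 < m) (hz : 1 ≤ z) : proj m (z + 1) = lav m (proj m z) 1 := by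
  have hz' : z + 1 = proj m z + 1 + (z - 1) / m * m := by
    have := proj_add_div_mul (m := m) hz
    omega
  rw [hz', proj_add_mul (by omega)]
  rcases (proj_le hm z).lt_or_eq with h | h
  · rw [lav_one h, proj_of_le (by omega) h]
  · rw [h, lav_of_le le_rfl, proj_of_lt (by omega) (by omega), Nat.add_sub_cancel_left]

theorem eq_add_of_proj_eq {m q r : ℕ} (h1 : 1 ≤ q) (hqr : q < r) (hr : r ≤ 2 * m)
    (h : proj m q = proj m r) : r = q + m := by
  rcases proj_eq_or h1 (m := m) (by omega) with hq | hq <;>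
  rcases proj_eq_or (m := m) (by omega : 1 ≤ r) hr with hr' | hr' <;> omega

noncomputable def period (N x : ℕ) : ℕ := sInf {y | 0 < y ∧ lav N x y = N}

section Period

variable {N x : ℕ}

theorem period_spec (hx : x < N) : 0 < period N x ∧ lav N x (period N x) = N := by
  obtain ⟨y, hy, -, h⟩ := exists_lav_eq_top hx
  exact Nat.sInf_mem (s := {y | 0 < y ∧ lav N x y = N}) ⟨y, hy, h⟩

theorem period_pos (hx : x < N) : 0 < period N x := (period_spec hx).1

theorem lav_period (hx : x < N) : lav N x (period N x) = N := (period_spec hx).2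

theorem period_le (hx : x < N) : period N x ≤ N - x := by
  obtain ⟨y, hy, hyN, h⟩ := exists_lav_eq_top hx
  exact (Nat.sInf_le (s := {y | 0 < y ∧ lav N x y = N}) ⟨hy, h⟩).trans hyN

theorem lav_ne_top_of_lt_period {y : ℕ} (hy : 0 < y) (h : y < period N x) : lav N x y ≠ N :=
  fun he => Nat.notMem_of_lt_sInf h ⟨hy, he⟩

theorem lav_add_period (hx : x < N) {y : ℕ} (hy : 1 ≤ y) :
    lav N x (y + period N x) = lav N x y := by
  induction y, hy using Nat.le_induction with
  | base =>
    rw [add_comm, lav_succ hx (period_pos hx), lav_period hx, lav_of_le le_rfl, lav_one hx]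
  | succ y hy ih =>
    rw [add_right_comm, lav_succ hx (by omega), ih, lav_succ hx hy]

theorem lav_add_of_period_dvd (hx : x < N) {y d : ℕ} (hy : 1 ≤ y) (hd : period N x ∣ d) :
    lav N x (y + d) = lav N x y := by
  obtain ⟨c, rfl⟩ := hd
  induction c with
  | zero => rfl
  | succ c ih => rw [mul_add_one, ← add_assoc, lav_add_period hx (by omega), ih]

theorem lav_proj (hx : x < N) {y d : ℕ} (hy : 1 ≤ y) (hd : period N x ∣ d) :
    lav N x (proj d y) = lav N x y := by
  conv_rhs => rw [← proj_add_div_mul (m := d) hy]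
  exact (lav_add_of_period_dvd hx (one_le_proj d y) (dvd_mul_of_dvd_right hd _)).symm

theorem lav_eq_top_iff (hx : x < N) {y : ℕ} (hy : 1 ≤ y) :
    lav N x y = N ↔ period N x ∣ y := by
  rw [← lav_proj hx hy dvd_rfl, ← proj_eq_self_iff (period_pos hx) hy]
  refine ⟨fun h => ?_, fun h => by rw [h]; exact lav_period hx⟩
  by_contra hne
  exact lav_ne_top_of_lt_period (one_le_proj _ _)
    (lt_of_le_of_ne (proj_le (period_pos hx) y) hne) h

end Period

-- This makes `lav m` left distributive (`lav_lav_one`) and passes from `m` to `2 * m` (`double`).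
def TopIsRightZero (m : ℕ) : Prop := ∀ x, 1 ≤ x → x ≤ m → lav m x m = m

namespace TopIsRightZero

variable {m : ℕ}

theorem period_dvd (hT : TopIsRightZero m) {x : ℕ} (hx1 : 1 ≤ x) (hx : x < m) :
    period m x ∣ m :=
  (lav_eq_top_iff hx (by omega)).1 (hT x hx1 hx.le)

theorem lav_lav_one (hT : TopIsRightZero m) {x y : ℕ} (hx1 : 1 ≤ x) (hx : x ≤ m)
    (hy1 : 1 ≤ y) (hy : y ≤ m) : lav m x (lav m y 1) = lav m (lav m x y) (lav m x 1) := by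
  rcases hx.lt_or_eq with hx | rfl
  · rcases hy.lt_or_eq with hy | rfl
    · rw [lav_one hy, lav_one hx, lav_succ hx hy1]
    · rw [lav_of_le le_rfl, hT x hx1 hx.le, lav_of_le le_rfl]
  · simp only [lav_of_le le_rfl]

theorem proj_lav_double (hT : TopIsRightZero m) (hm : 0 < m) {x y : ℕ} (hx1 : 1 ≤ x)
    (hx : x ≤ 2 * m) (hy : 1 ≤ y) :
    proj m (lav (2 * m) x y) = lav m (proj m x) (proj m y) := by
  rcases hx.lt_or_eq with hx | rfl
  · induction y, hy using Nat.le_induction with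
    | base => rw [lav_one hx, proj_succ hm hx1, proj_of_le le_rfl hm]
    | succ y hy ih =>
      obtain ⟨hxy, hxy'⟩ := lav_mem_Ioc hx y
      rw [lav_succ hx hy, hT.proj_lav_double hm (by omega) hxy' (by omega), ih,
        proj_succ hm hx1, proj_succ hm hy, hT.lav_lav_one (one_le_proj _ _) (proj_le hm _)
          (one_le_proj _ _) (proj_le hm _)]
  · rw [lav_of_le le_rfl, (proj_eq_self_iff hm (by omega)).2 (dvd_mul_left m 2), lav_of_le le_rfl]
termination_by 2 * m - x

theorem lav_double_of_le (hT : TopIsRightZero m) (hm : 0 < m) {u y : ℕ} (hu : m ≤ u)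
    (hu2 : u < 2 * m) (hy : 1 ≤ y) :
    lav (2 * m) u y = lav m (proj m u) (proj m y) + m := by
  obtain ⟨h1, h2⟩ := lav_mem_Ioc hu2 y
  rw [← hT.proj_lav_double hm (by omega) hu2.le hy]
  have := proj_le hm (lav (2 * m) u y)
  rcases proj_eq_or (m := m) (by omega) h2 with h | h <;> omega

theorem lav_double_self (hT : TopIsRightZero m) (hm : 0 < m) {y : ℕ} (hy : 1 ≤ y) :
    lav (2 * m) m y = proj m y + m := by
  rw [hT.lav_double_of_le hm le_rfl (by omega) hy, proj_of_le hm le_rfl, lav_of_le le_rfl]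

theorem lav_double_add (hT : TopIsRightZero m) (hm : 0 < m) {x y : ℕ} (hx1 : 1 ≤ x)
    (hx : x < m) (hy : 1 ≤ y) : lav (2 * m) (x + m) y = lav m x y + m := by
  rw [hT.lav_double_of_le hm (by omega) (by omega) hy, proj_of_lt (by omega) (by omega),
    Nat.add_sub_cancel, lav_proj hx hy (hT.period_dvd hx1 hx)]

theorem period_double_dvd (hT : TopIsRightZero m) (hm : 0 < m) {x : ℕ} (hx1 : 1 ≤ x)
    (hx : x < m) : period (2 * m) x ∣ 2 * period m x := by
  set π := period m x
  have hπ : 0 < π := period_pos hx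
  have hπle : π ≤ m - x := period_le hx
  have hx2 : x < 2 * m := by omega
  have hproj : proj m (lav (2 * m) x π) = m := by
    rw [hT.proj_lav_double hm hx1 hx2.le hπ, proj_of_le hx1 hx.le, proj_of_le hπ (by omega),
      lav_period hx]
  obtain ⟨h1, h2⟩ := lav_mem_Ioc hx2 π
  rcases proj_eq_or (m := m) (by omega) h2 with h | h <;> rw [hproj] at h
  · -- From `x * π = m` on, row `x` repeats row `x` of `A_m` shifted by `m`.
    have shifted : ∀ j, 1 ≤ j → j ≤ π → lav (2 * m) x (π + j) = lav m x j + m := by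
      intro j hj hjπ
      induction j, hj using Nat.le_induction with
      | base =>
        rw [lav_succ hx2 hπ, h, hT.lav_double_self hm (by omega),
          proj_of_le (by omega) (by omega), lav_one hx]
      | succ j hj ih =>
        obtain ⟨hxj, hjm⟩ := lav_mem_Ioc hx j
        have hlt : lav m x j < m :=
          lt_of_le_of_ne hjm (lav_ne_top_of_lt_period (by omega) (by omega))
        rw [← add_assoc, lav_succ hx2 (by omega), ih (by omega),
          hT.lav_double_add hm (by omega) hlt (by omega), lav_succ hx hj]
    have h2π := shifted π hπ le_rfl
    rw [lav_period hx] at h2π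
    exact (lav_eq_top_iff hx2 (by omega)).1 (by rw [two_mul π, h2π]; omega)
  · exact dvd_mul_of_dvd_right ((lav_eq_top_iff hx2 hπ).1 (by omega)) 2

theorem period_double_le (hT : TopIsRightZero m) (hm : 0 < m) {x : ℕ} (hx1 : 1 ≤ x)
    (hx : x < m) : period (2 * m) x ≤ 2 * (m - x) :=
  (Nat.le_of_dvd (by have := period_pos hx; omega) (hT.period_double_dvd hm hx1 hx)).trans
    (by have := period_le hx; omega)

theorem double (hT : TopIsRightZero m) (hm : 0 < m) : TopIsRightZero (2 * m) := by
  intro x hx1 hx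
  have hmm : proj m (2 * m) = m := (proj_eq_self_iff hm (by omega)).2 (dvd_mul_left m 2)
  rcases lt_or_ge x m with hlt | hge
  · rw [lav_eq_top_iff (by omega) (by omega)]
    exact (hT.period_double_dvd hm hx1 hlt).trans (mul_dvd_mul_left 2 (hT.period_dvd hx1 hlt))
  · rcases hx.lt_or_eq with hx | rfl
    · rw [hT.lav_double_of_le hm hge hx (by omega), hmm, hT _ (one_le_proj _ _) (proj_le hm _),
        two_mul]
    · exact lav_of_le le_rfl _

end TopIsRightZero

theorem topIsRightZero_two_pow (n : ℕ) : TopIsRightZero (2 ^ n) := by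
  induction n with
  | zero =>
    intro x hx1 hx
    exact lav_of_le (by rwa [pow_zero]) _
  | succ n ih => rw [pow_succ']; exact ih.double (by positivity)

theorem dvd_of_dvd_two_pow_of_lt {a b k : ℕ} (ha : a ∣ 2 ^ k) (hb : b ∣ 2 ^ k) (h : a < 2 * b) :
    a ∣ b := by
  obtain ⟨i, -, rfl⟩ := (Nat.dvd_prime_pow Nat.prime_two).1 ha
  obtain ⟨j, -, rfl⟩ := (Nat.dvd_prime_pow Nat.prime_two).1 hb
  rw [← pow_succ'] at h
  exact pow_dvd_pow 2 (Nat.lt_succ_iff.1 ((Nat.pow_lt_pow_iff_right (by norm_num)).1 h))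

theorem dvd_two_pow_of_lt {d n : ℕ} (hd : d ∣ 2 ^ (n + 1)) (h : d < 2 ^ (n + 1)) : d ∣ 2 ^ n :=
  dvd_of_dvd_two_pow_of_lt hd (pow_dvd_pow 2 n.le_succ) (by rwa [← pow_succ'])

theorem period_dvd_two_pow {n x : ℕ} (hx1 : 1 ≤ x) (hx : x < 2 ^ (n + 1)) :
    period (2 ^ (n + 1)) x ∣ 2 ^ n :=
  dvd_two_pow_of_lt ((topIsRightZero_two_pow _).period_dvd hx1 hx)
    ((period_le hx).trans_lt (by omega))

theorem gcd_dvd_two_pow {n p : ℕ} (hp1 : 1 ≤ p) (hp : p < 2 ^ (n + 1)) :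
    Nat.gcd p (2 ^ (n + 1)) ∣ 2 ^ n :=
  dvd_two_pow_of_lt (Nat.gcd_dvd_right _ _) ((Nat.gcd_le_left _ hp1).trans_lt hp)

theorem proj_lav_two_pow {j n x y : ℕ} (hj : j ≤ n) (hx1 : 1 ≤ x) (hx : x ≤ 2 ^ n) (hy : 1 ≤ y) :
    proj (2 ^ j) (lav (2 ^ n) x y) = lav (2 ^ j) (proj (2 ^ j) x) (proj (2 ^ j) y) := by
  induction n, hj using Nat.le_induction generalizing x y with
  | base =>
    rcases hx.lt_or_eq with hx | rfl
    · obtain ⟨h1, h2⟩ := lav_mem_Ioc hx y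
      rw [proj_of_le (by omega) h2, proj_of_le hx1 hx.le,
        lav_proj hx hy ((topIsRightZero_two_pow j).period_dvd hx1 hx)]
    · rw [lav_of_le le_rfl, proj_of_le hx1 le_rfl, lav_of_le le_rfl]
  | succ n hjn ih =>
    have hd : 2 ^ j ∣ 2 ^ n := pow_dvd_pow 2 hjn
    rw [pow_succ'] at hx ⊢
    rw [← proj_proj hd, (topIsRightZero_two_pow n).proj_lav_double (by positivity) hx1 hx hy,
      ih (one_le_proj _ _) (proj_le (by positivity) _) (one_le_proj _ _), proj_proj hd,
      proj_proj hd]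

theorem period_dvd_of_sub_lt {n t d : ℕ} (ht1 : 1 ≤ t) (ht : t < 2 ^ n)
    (hd : d ∣ 2 ^ (n + 1)) (htd : 2 ^ n - t < d) : period (2 ^ (n + 1)) t ∣ d := by
  have hbound := (topIsRightZero_two_pow n).period_double_le (by positivity) ht1 ht
  rw [← pow_succ'] at hbound
  exact dvd_of_dvd_two_pow_of_lt
    ((topIsRightZero_two_pow (n + 1)).period_dvd ht1 (by rw [pow_succ']; omega)) hd
    (by omega)

theorem eq_sub_of_lav_eq_sub {n d z s t : ℕ} (hd : d ∣ 2 ^ n) (hdz : d ∣ z - 1) (hs : s + 1 < d)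
    (hz1 : 1 ≤ z) (hz : z ≤ 2 ^ n) (ht1 : 1 ≤ t) (ht : t ≤ 2 ^ n)
    (h : lav (2 ^ n) t z = 2 ^ n - s) : t = 2 ^ n - 1 - s := by
  induction n generalizing d z s t with
  | zero =>
    have := Nat.le_of_dvd one_pos hd
    omega
  | succ n ih =>
    have hdN := Nat.le_of_dvd (by positivity) hd
    have hN : 2 ^ (n + 1) = 2 * 2 ^ n := pow_succ' 2 n
    rcases ht.lt_or_eq with ht | rfl
    swap
    · rw [lav_of_le le_rfl] at h
      have := Nat.le_of_dvd (by omega) (Nat.dvd_sub hd hdz)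
      omega
    rcases hz1.lt_or_eq with hz1 | rfl
    swap
    · rw [lav_one ht] at h
      omega
    have hdm : d ∣ 2 ^ n :=
      dvd_two_pow_of_lt hd (by have := Nat.le_of_dvd (by omega) hdz; omega)
    have hdm' := Nat.le_of_dvd (by positivity) hdm
    have hproj := proj_lav_two_pow n.le_succ ht1 ht.le hz1.le
    rw [h, proj_of_lt (by omega) (by omega)] at hproj
    have hpt := ih hdm (dvd_proj_sub_one hdm hdz) hs (one_le_proj _ _)
      (proj_le (by positivity) _) (one_le_proj _ _) (proj_le (by positivity) _)
      (by rw [← hproj]; omega)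
    rcases proj_eq_or (m := 2 ^ n) ht1 (by omega) with ht' | ht'
    · -- `t` lies just below the middle row, so its row is periodic modulo `d`.
      have hval := lav_proj (y := z) ht hz1.le
        (period_dvd_of_sub_lt ht1 (by omega) hd (by omega))
      rw [proj_eq_one hdz, lav_one ht, h] at hval
      omega
    · omega

theorem proj_two_mul_gcd {p N : ℕ} (hp : 0 < p) (h : 2 * Nat.gcd p N ∣ N) :
    proj (2 * Nat.gcd p N) p = Nat.gcd p N := by
  set g := Nat.gcd p N
  have hg : 0 < g := Nat.gcd_pos_of_pos_left N hp
  obtain ⟨e, he⟩ : g ∣ p := Nat.gcd_dvd_left p N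
  have hodd : ¬ 2 ∣ e := by
    rintro ⟨f, rfl⟩
    have := Nat.le_of_dvd hg (Nat.dvd_gcd ⟨f, by rw [he]; ring⟩ h)
    omega
  obtain ⟨f, rfl⟩ : ∃ f, e = 2 * f + 1 := ⟨e / 2, by omega⟩
  rw [he, show g * (2 * f + 1) = g + f * (2 * g) by ring, proj_add_mul hg,
    proj_of_le hg (by omega)]

theorem gcd_proj_two_pow {n p : ℕ} (hp1 : 1 ≤ p) (hp : p < 2 ^ (n + 1)) :
    Nat.gcd (proj (2 ^ n) p) (2 ^ n) = Nat.gcd p (2 ^ (n + 1)) := by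
  have hmod : Nat.gcd (proj (2 ^ n) p) (2 ^ n) = Nat.gcd p (2 ^ n) := by
    conv_rhs => rw [← proj_add_div_mul (m := 2 ^ n) hp1]
    exact (Nat.gcd_add_mul_right_left _ _ _).symm
  rw [hmod]
  exact Nat.dvd_antisymm
    (Nat.dvd_gcd (Nat.gcd_dvd_left _ _)
      ((Nat.gcd_dvd_right _ _).trans (pow_dvd_pow 2 n.le_succ)))
    (Nat.dvd_gcd (Nat.gcd_dvd_left _ _) (gcd_dvd_two_pow hp1 hp))

theorem gcd_dvd_period {n p : ℕ} (hp1 : 1 ≤ p) (hp : p < 2 ^ (n + 1)) :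
    Nat.gcd p (2 ^ (n + 1)) ∣ period (2 ^ (n + 1)) p := by
  -- Reduced to `A_{k+1}` with `2 ^ k = gcd p N`, row `p` becomes the middle row `2 ^ k`, which
  -- reaches the top exactly at the multiples of `2 ^ k`.
  obtain ⟨k, hk, hgk⟩ := (Nat.dvd_prime_pow Nat.prime_two).1 (gcd_dvd_two_pow hp1 hp)
  have hπ := period_pos hp
  have hproj := proj_lav_two_pow (j := k + 1) (by omega) hp1 hp.le hπ
  rw [lav_period hp, (proj_eq_self_iff (by positivity) Nat.one_le_two_pow).2
      (pow_dvd_pow 2 (by omega)), pow_succ', ← hgk,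
    proj_two_mul_gcd hp1 (by rw [hgk, ← pow_succ']; exact pow_dvd_pow 2 (by omega)), hgk,
    (topIsRightZero_two_pow k).lav_double_self (by positivity) (one_le_proj _ _),
    proj_proj (dvd_mul_left _ _)] at hproj
  rw [hgk]
  exact (proj_eq_self_iff (by positivity) hπ).1 (by omega)

theorem lav_two_pow_sub {n p s : ℕ} (hp1 : 1 ≤ p) (hp : p < 2 ^ (n + 1))
    (hs : s < Nat.gcd p (2 ^ (n + 1))) :
    lav (2 ^ (n + 1)) p (2 ^ n - s) = 2 ^ (n + 1) - s := by
  have hπ := period_pos hp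
  have hgπ := Nat.le_of_dvd hπ (gcd_dvd_period hp1 hp)
  have hπm : period (2 ^ (n + 1)) p ∣ 2 ^ n := period_dvd_two_pow hp1 hp
  have hπm' := Nat.le_of_dvd (by positivity) hπm
  have descend : ∀ i, i < Nat.gcd p (2 ^ (n + 1)) →
      lav (2 ^ (n + 1)) p (period (2 ^ (n + 1)) p - i) = 2 ^ (n + 1) - i := by
    intro i hi
    induction i with
    | zero => exact lav_period hp
    | succ i ih =>
      have hstep := ih (by omega)
      rw [show period (2 ^ (n + 1)) p - i = period (2 ^ (n + 1)) p - (i + 1) + 1 by omega,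
        lav_succ hp (by omega)] at hstep
      obtain ⟨h1, h2⟩ := lav_mem_Ioc hp (period (2 ^ (n + 1)) p - (i + 1))
      have := eq_sub_of_lav_eq_sub (Nat.gcd_dvd_right p _)
        (by rw [Nat.add_sub_cancel]; exact Nat.gcd_dvd_left p _) hi (by omega) (by omega)
        (by omega) h2 hstep
      omega
  rw [← descend s hs, ← lav_add_of_period_dvd hp (y := period (2 ^ (n + 1)) p - s) (by omega)
    (Nat.dvd_sub hπm dvd_rfl)]
  congr 1
  omega

theorem sub_lt_gcd_of_lav_eq_self {n p q : ℕ} (hp1 : 1 ≤ p) (hp : p ≤ 2 ^ n) (hq1 : 1 ≤ q)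
    (hq : q ≤ 2 ^ n) (h : lav (2 ^ n) p q = q) : 2 ^ n - q < Nat.gcd p (2 ^ n) := by
  induction n generalizing p q with
  | zero => simp only [pow_zero, Nat.gcd_one_right]; omega
  | succ n ih =>
    have hm : 0 < 2 ^ n := by positivity
    have hN : 2 ^ (n + 1) = 2 * 2 ^ n := pow_succ' 2 n
    rcases hp.lt_or_eq with hp | rfl
    · have hproj := proj_lav_two_pow n.le_succ hp1 hp.le hq1
      rw [h] at hproj
      have hlow := ih (one_le_proj _ _) (proj_le hm _) (one_le_proj _ _) (proj_le hm _)
        hproj.symm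
      rw [gcd_proj_two_pow hp1 hp] at hlow
      rcases proj_eq_or (m := 2 ^ n) hq1 (by omega) with hq' | hq'
      · have hsub := lav_two_pow_sub hp1 hp hlow
        rw [Nat.sub_sub_self (proj_le hm _), ← hq', h] at hsub
        omega
      · omega
    · rw [Nat.gcd_self]
      omega

theorem lav_ne_self {n p q : ℕ} (hp1 : 1 ≤ p) (hp : p < 2 ^ (n + 1)) (hq1 : 1 ≤ q)
    (hq : q ≤ 2 ^ n) : lav (2 ^ (n + 1)) p q ≠ q := by
  intro h
  have hN : 2 ^ (n + 1) = 2 * 2 ^ n := pow_succ' 2 n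
  have := sub_lt_gcd_of_lav_eq_self hp1 hp.le hq1 (by omega) h
  have := Nat.le_of_dvd (by positivity) (gcd_dvd_two_pow hp1 hp)
  omega

theorem proj_image_laverCol {n q : ℕ} (hq : 1 ≤ q) :
    proj (2 ^ n) '' laverCol (n + 1) (lav (2 ^ (n + 1))) q =
      laverCol n (lav (2 ^ n)) (proj (2 ^ n) q) := by
  have hproj {p : ℕ} (hp1 : 1 ≤ p) (hp : p ≤ 2 ^ (n + 1)) :=
    proj_lav_two_pow n.le_succ hp1 hp hq
  ext v
  constructor
  · rintro ⟨_, ⟨p, hp1, hp, rfl⟩, rfl⟩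
    exact ⟨proj (2 ^ n) p, one_le_proj _ _, proj_le (by positivity) _, (hproj hp1 hp).symm⟩
  · rintro ⟨p, hp1, hp, rfl⟩
    have hp' : p ≤ 2 ^ (n + 1) := hp.trans (Nat.pow_le_pow_right two_pos n.le_succ)
    exact ⟨_, ⟨p, hp1, hp', rfl⟩, by rw [hproj hp1 hp', proj_of_le hp1 hp]⟩

theorem laverCol_eq_insert {n q : ℕ} (hq1 : 1 ≤ q) (hq : q ≤ 2 ^ n) :
    laverCol (n + 1) (lav (2 ^ (n + 1))) q =
      insert q (laverCol (n + 1) (lav (2 ^ (n + 1))) (q + 2 ^ n)) := by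
  have hN : 2 ^ (n + 1) = 2 * 2 ^ n := pow_succ' 2 n
  have hshift {p : ℕ} (hp1 : 1 ≤ p) (hp : p < 2 ^ (n + 1)) :
      lav (2 ^ (n + 1)) p (q + 2 ^ n) = lav (2 ^ (n + 1)) p q :=
    lav_add_of_period_dvd hp hq1 (period_dvd_two_pow hp1 hp)
  ext v
  constructor
  · rintro ⟨p, hp1, hp, rfl⟩
    rcases hp.lt_or_eq with hp | rfl
    · exact Or.inr ⟨p, hp1, hp.le, hshift hp1 hp⟩
    · exact Or.inl (lav_of_le le_rfl q)
  · rintro (rfl | ⟨p, hp1, hp, rfl⟩)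
    · exact ⟨2 ^ (n + 1), Nat.one_le_two_pow, le_rfl, lav_of_le le_rfl _⟩
    · rcases hp.lt_or_eq with hp | rfl
      · exact ⟨p, hp1, hp.le, (hshift hp1 hp).symm⟩
      · refine ⟨2 ^ n, Nat.one_le_two_pow, by omega, ?_⟩
        rw [lav_of_le le_rfl, hN, (topIsRightZero_two_pow n).lav_double_self (by positivity) hq1,
          proj_of_le hq1 hq]

theorem notMem_laverCol_add {n q : ℕ} (hq1 : 1 ≤ q) (hq : q ≤ 2 ^ n) :
    q ∉ laverCol (n + 1) (lav (2 ^ (n + 1))) (q + 2 ^ n) := by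
  rintro ⟨p, hp1, hp, hpq⟩
  rcases hp.lt_or_eq with hp | rfl
  · rw [lav_add_of_period_dvd hp hq1 (period_dvd_two_pow hp1 hp)] at hpq
    exact lav_ne_self hp1 hp hq1 hq hpq
  · rw [lav_of_le le_rfl] at hpq
    have : 0 < 2 ^ n := by positivity
    omega

theorem laverCol_ne {n q r : ℕ} (hq : 1 ≤ q) (hqr : q < r) (hr : r ≤ 2 ^ n) :
    laverCol n (lav (2 ^ n)) q ≠ laverCol n (lav (2 ^ n)) r := by
  induction n generalizing q r with
  | zero => simp only [pow_zero] at hr; omega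
  | succ n ih =>
    intro hcol
    have hm : 0 < 2 ^ n := by positivity
    have hN : 2 ^ (n + 1) = 2 * 2 ^ n := pow_succ' 2 n
    by_cases hpr : proj (2 ^ n) q = proj (2 ^ n) r
    · obtain rfl := eq_add_of_proj_eq hq hqr (by omega) hpr
      have hq' : q ≤ 2 ^ n := by omega
      refine notMem_laverCol_add hq hq' ?_
      rw [← hcol, laverCol_eq_insert hq hq']
      exact Set.mem_insert q _
    · have himage := congrArg (proj (2 ^ n) '' ·) hcol
      simp only [proj_image_laverCol hq, proj_image_laverCol (by omega : 1 ≤ r)] at himage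
      rcases lt_or_gt_of_ne hpr with h | h
      · exact ih (one_le_proj _ _) h (proj_le hm _) himage
      · exact ih (one_le_proj _ _) h (proj_le hm _) himage.symm

end Laver

namespace IsLaverOp

open Laver

variable {n : ℕ} {op : ℕ → ℕ → ℕ}

theorem op_top_left (h : IsLaverOp n op) {y : ℕ} (hy1 : 1 ≤ y) (hy : y ≤ 2 ^ n) :
    op (2 ^ n) y = y := by
  obtain ⟨-, hsucc, htop, hdist⟩ := h
  induction y, hy1 using Nat.le_induction with
  | base => exact htop
  | succ y hy1 ih =>
    have := hdist (2 ^ n) y Nat.one_le_two_pow le_rfl hy1 (by omega)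
    rwa [hsucc y hy1 (by omega), ih (by omega), htop, hsucc y hy1 (by omega)] at this

theorem eq_lav (h : IsLaverOp n op) {x y : ℕ} (hx1 : 1 ≤ x) (hx : x ≤ 2 ^ n) (hy1 : 1 ≤ y)
    (hy : y ≤ 2 ^ n) : op x y = lav (2 ^ n) x y := by
  obtain ⟨-, hsucc, -, hdist⟩ := id h
  rcases hx.lt_or_eq with hx | rfl
  · induction y, hy1 using Nat.le_induction with
    | base => rw [hsucc x hx1 hx, lav_one hx]
    | succ y hy1 ih =>
      obtain ⟨h1, h2⟩ := lav_mem_Ioc hx y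
      calc op x (y + 1) = op x (op y 1) := by rw [hsucc y hy1 (by omega)]
        _ = op (op x y) (op x 1) := hdist x y hx1 hx.le hy1 (by omega)
        _ = lav (2 ^ n) (lav (2 ^ n) x y) (x + 1) := by
          rw [ih (by omega), hsucc x hx1 hx, h.eq_lav (by omega) h2 (by omega) (by omega)]
        _ = lav (2 ^ n) x (y + 1) := (lav_succ hx hy1).symm
  · rw [h.op_top_left hy1 hy, lav_of_le le_rfl]
termination_by 2 ^ n - x

theorem laverCol_eq (h : IsLaverOp n op) {q : ℕ} (hq1 : 1 ≤ q) (hq : q ≤ 2 ^ n) :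
    laverCol n op q = laverCol n (lav (2 ^ n)) q := by
  ext v
  constructor <;> rintro ⟨p, hp1, hp, rfl⟩ <;> exact ⟨p, hp1, hp, by rw [h.eq_lav hp1 hp hq1 hq]⟩

end IsLaverOp

/-- The columns of `A_n` are pairwise distinct; moreover, for `n ≥ 1` and
`q ≤ 2^(n-1)`, the column of `q` is the disjoint union of the column of
`q + 2^(n-1)` and `{q}`. -/
theorem laver_columns_distinct (n : ℕ) (op : ℕ → ℕ → ℕ) (h : IsLaverOp n op) :
    (∀ q r, 1 ≤ q → q < r → r ≤ 2 ^ n → laverCol n op q ≠ laverCol n op r) ∧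
    (1 ≤ n → ∀ q, 1 ≤ q → q ≤ 2 ^ (n - 1) →
      laverCol n op q = laverCol n op (q + 2 ^ (n - 1)) ∪ {q} ∧
      q ∉ laverCol n op (q + 2 ^ (n - 1))) := by
  refine ⟨fun q r hq hqr hr => ?_, fun hn q hq1 hq => ?_⟩
  · rw [h.laverCol_eq hq (by omega), h.laverCol_eq (by omega) hr]
    exact Laver.laverCol_ne hq hqr hr
  · obtain ⟨k, rfl⟩ : ∃ k, n = k + 1 := ⟨n - 1, by omega⟩
    rw [Nat.add_sub_cancel] at hq ⊢
    have hN : 2 ^ (k + 1) = 2 * 2 ^ k := pow_succ' 2 k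
    rw [h.laverCol_eq hq1 (by omega), h.laverCol_eq (by omega) (by omega), Set.union_singleton]
    exact ⟨Laver.laverCol_eq_insert hq1 hq, Laver.notMem_laverCol_add hq1 hq⟩
end
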